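/- arXiv:1808.04299 — 5 statements merged into one kernel-verified Lean document; each statement's English description precedes it below -/
import Mathlib

section
/- For every real number s > 0, the ratio Γ(s + 3/4) / Γ(s + 1/4) is strictly greater than √s. -/
open Real

private noncomputable def fA (t : ℝ) : ℝ := Real.Gamma (t + 3/4) / Real.Gamma (t + 1/4)

private lemma fA_pos {t : ℝ} (ht : 0 < t) : 0 < fA t :=
  div_pos (Real.Gamma_pos_of_pos (by linarith)) (Real.Gamma_pos_of_pos (by linarith))

private lemma gamma_midpoint (x y : ℝ) (hx : 0 < x) (hy : 0 < y) :
    Real.Gamma ((x + y) / 2) ^ 2 ≤ Real.Gamma x * Real.Gamma y := by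
  have h := Real.convexOn_log_Gamma.2 (Set.mem_Ioi.2 hx) (Set.mem_Ioi.2 hy)
    (by norm_num : (0:ℝ) ≤ 1/2) (by norm_num : (0:ℝ) ≤ 1/2) (by norm_num)
  simp only [smul_eq_mul, Function.comp_apply] at h
  rw [show (1/2 : ℝ) * x + 1/2 * y = (x + y)/2 by ring] at h
  have hm : 0 < Real.Gamma ((x + y) / 2) := Real.Gamma_pos_of_pos (by linarith)
  have hgx := Real.Gamma_pos_of_pos hx
  have hgy := Real.Gamma_pos_of_pos hy
  have hlog : Real.log (Real.Gamma ((x+y)/2) ^ 2) ≤ Real.log (Real.Gamma x * Real.Gamma y) := by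
    rw [Real.log_pow, Real.log_mul hgx.ne' hgy.ne']
    push_cast; linarith
  exact (Real.log_le_log_iff (by positivity) (by positivity)).mp hlog

private lemma fA_rec {t : ℝ} (ht : 0 < t) : fA (t+1) * (t + 1/4) = fA t * (t + 3/4) := by
  have h1 : Real.Gamma (t + 1 + 3/4) = (t + 3/4) * Real.Gamma (t + 3/4) := by
    rw [show t + 1 + 3/4 = (t + 3/4) + 1 by ring, Real.Gamma_add_one (by positivity)]
  have h2 : Real.Gamma (t + 1 + 1/4) = (t + 1/4) * Real.Gamma (t + 1/4) := by
    rw [show t + 1 + 1/4 = (t + 1/4) + 1 by ring, Real.Gamma_add_one (by positivity)]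
  have hb := Real.Gamma_pos_of_pos (show (0:ℝ) < t + 1/4 by linarith)
  unfold fA
  rw [h1, h2]
  field_simp

private lemma fA_sq_lower {t : ℝ} (ht : 0 < t) : t^2 ≤ (t + 1/2) * fA t ^ 2 := by
  set a := Real.Gamma t with ha'
  set b := Real.Gamma (t + 1/4) with hb'
  set c := Real.Gamma (t + 1/2) with hc'
  set e := Real.Gamma (t + 3/4) with he'
  have ha : 0 < a := Real.Gamma_pos_of_pos ht
  have hb : 0 < b := Real.Gamma_pos_of_pos (by linarith)
  have hc : 0 < c := Real.Gamma_pos_of_pos (by linarith)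
  have he : 0 < e := Real.Gamma_pos_of_pos (by linarith)
  have L2 : b^2 ≤ a * c := by
    have h := gamma_midpoint t (t + 1/2) ht (by linarith)
    rwa [show (t + (t + 1/2))/2 = t + 1/4 by ring] at h
  have L3 : c^2 ≤ b * e := by
    have h := gamma_midpoint (t + 1/4) (t + 3/4) (by linarith) (by linarith)
    rwa [show ((t + 1/4) + (t + 3/4))/2 = t + 1/2 by ring] at h
  have L1 : t^2 * a^2 ≤ (t + 1/2) * c^2 := by
    have h := gamma_midpoint (t + 1/2) (t + 3/2) (by linarith) (by linarith)
    rw [show ((t + 1/2) + (t + 3/2))/2 = t + 1 by ring] at h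
    rw [Real.Gamma_add_one ht.ne', show t + 3/2 = (t + 1/2) + 1 by ring,
      Real.Gamma_add_one (by positivity : (t + 1/2 : ℝ) ≠ 0)] at h
    nlinarith [h]
  have h4 : b^4 ≤ a^2 * c^2 := by nlinarith [L2, sq_nonneg b, ha.le, hc.le]
  have h5 : c^4 ≤ b^2 * e^2 := by nlinarith [L3, sq_nonneg c, hb.le, he.le]
  have h6 : t^2 * b^2 * b^2 ≤ ((t + 1/2) * e^2) * b^2 := by
    nlinarith [mul_le_mul_of_nonneg_left h4 (sq_nonneg t),
      mul_le_mul_of_nonneg_right L1 (sq_nonneg c),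
      mul_le_mul_of_nonneg_left h5 (show (0:ℝ) ≤ t + 1/2 by linarith)]
  have h7 : t^2 * b^2 ≤ (t + 1/2) * e^2 := le_of_mul_le_mul_right h6 (by positivity)
  have : fA t ^ 2 = e^2 / b^2 := by unfold fA; rw [div_pow]
  rw [this, mul_div_assoc', le_div_iff₀ (by positivity : (0:ℝ) < b^2)]
  linarith

private lemma key_id {t : ℝ} (ht : 0 < t) :
    ((t + 1) - fA (t+1)^2) * (t + 1/4)^2 = 1/16 + (t - fA t ^2) * (t + 3/4)^2 := by
  have hrec := fA_rec ht
  have hsq : fA (t+1)^2 * (t + 1/4)^2 = fA t ^2 * (t + 3/4)^2 := by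
    have := congrArg (· ^ 2) hrec
    simpa [mul_pow] using this
  nlinarith [hsq]

private lemma step {η t : ℝ} (ht : 0 < t)
    (h : η * fA t ^ 2 ≤ t - fA t ^ 2) :
    η * fA (t+1) ^ 2 ≤ (t + 1) - fA (t+1) ^ 2 := by
  have key := key_id ht
  have hrec := fA_rec ht
  have hsq : fA (t+1)^2 * (t + 1/4)^2 = fA t ^2 * (t + 3/4)^2 := by
    have := congrArg (· ^ 2) hrec
    simpa [mul_pow] using this
  have h1 : η * fA t ^2 * (t + 3/4)^2 ≤ (t - fA t ^2) * (t + 3/4)^2 :=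
    mul_le_mul_of_nonneg_right h (sq_nonneg _)
  have h3 : η * (fA (t+1)^2 * (t + 1/4)^2) = η * (fA t ^2 * (t + 3/4)^2) :=
    congrArg (η * ·) hsq
  have h2 : η * fA (t+1)^2 * (t + 1/4)^2 ≤ ((t + 1) - fA (t+1)^2) * (t + 1/4)^2 := by
    nlinarith [h1, key, h3]
  exact le_of_mul_le_mul_right h2 (by positivity)

theorem gamma_ratio_gt_sqrt (s : ℝ) (hs : 0 < s) :
    Real.sqrt s < Real.Gamma (s + 3/4) / Real.Gamma (s + 1/4) := by
  show Real.sqrt s < fA s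
  by_contra hcon
  push_neg at hcon
  have hfs : fA s ^ 2 ≤ s := by
    have h2 : fA s ^ 2 ≤ Real.sqrt s ^ 2 := pow_le_pow_left₀ (fA_pos hs).le hcon 2
    rwa [Real.sq_sqrt hs.le] at h2
  -- d(s+1) > 0
  have hkey := key_id hs
  have hd1 : 0 < (s + 1) - fA (s+1)^2 := by nlinarith [hkey, sq_nonneg (s + 3/4), sq_nonneg (s + 1/4)]
  have hf1 : 0 < fA (s+1) := fA_pos (by linarith)
  set η : ℝ := ((s + 1) - fA (s+1)^2) / fA (s+1)^2 with hη'
  have hη : 0 < η := div_pos hd1 (by positivity)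
  have hbase : η * fA (s+1)^2 ≤ (s + 1) - fA (s+1)^2 := by
    rw [hη', div_mul_cancel₀ _ (by positivity : fA (s+1)^2 ≠ 0)]
  have hind : ∀ n : ℕ, η * fA (s + 1 + n)^2 ≤ (s + 1 + n) - fA (s + 1 + n)^2 := by
    intro n
    induction n with
    | zero => simpa using hbase
    | succ k ih =>
        have hk : (0:ℝ) < s + 1 + k := by positivity
        have := step hk ih
        have heq : s + 1 + (k:ℝ) + 1 = s + 1 + ((k:ℕ) + 1 : ℕ) := by push_cast; ring
        rw [heq] at this
        exact this
  obtain ⟨n, hn⟩ := exists_nat_gt (1/(2*η) + 1)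
  set u : ℝ := s + 1 + n with hu'
  have hu : 0 < u := by positivity
  have hlow := fA_sq_lower hu
  have hd_half : u - fA u ^ 2 ≤ 1/2 := by nlinarith [hlow, hu]
  have hf_low : u - 1/2 ≤ fA u ^ 2 := by nlinarith [hlow, hu]
  have hiv := hind n
  have hn_le : (n : ℝ) ≤ fA u ^ 2 := by
    have : (n : ℝ) ≤ u - 1/2 := by rw [hu']; linarith
    linarith
  have h8 : η * n ≤ η * fA u ^ 2 := mul_le_mul_of_nonneg_left hn_le hη.le
  have h9 : 1/2 < η * n := by
    have := mul_lt_mul_of_pos_left hn hη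
    have hval : η * (1/(2*η) + 1) = 1/2 + η := by field_simp
    rw [hval] at this
    linarith
  linarith [hiv]
end

section
/- For every positive integer d, Γ((d+1)/2) / Γ(d/2) > √((d - 1/2)/2). -/
open Filter Finset Topology

lemma term_lower (y : ℝ) (hy : 1/2 ≤ y) :
    (y - 1/4) / (y + 3/4) ≤ (y / (y + 1/2))^2 := by
  rw [div_pow, div_le_div_iff₀ (by linarith) (by positivity)]
  nlinarith [sq_nonneg y]

lemma prod_lower (x : ℝ) (hx : 1/2 ≤ x) (n : ℕ) :
    x^2*(x+3/4)/(x+1/2)^2 / (x + n + 3/4)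
      ≤ ∏ i ∈ Finset.range (n+1), ((x+i)/(x+i+1/2))^2 := by
  induction n with
  | zero =>
    rw [Finset.prod_range_one]
    simp only [Nat.cast_zero, add_zero]
    rw [div_div, div_pow, div_le_div_iff₀ (by positivity) (by positivity)]
    nlinarith [sq_nonneg x]
  | succ n ih =>
    rw [Finset.prod_range_succ]
    push_cast
    simp only [← add_assoc]
    have hn : (0:ℝ) ≤ n := Nat.cast_nonneg n
    have ht := term_lower (x + (n:ℝ) + 1) (by linarith)
    have he1 : x + (n:ℝ) + 1 - 1/4 = x + (n:ℝ) + 3/4 := by ring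
    rw [he1] at ht
    have hprodpos : (0:ℝ) ≤ x^2*(x+3/4)/(x+1/2)^2 / (x + n + 3/4) := by positivity
    have hstep : (0:ℝ) ≤ (x + (n:ℝ) + 3/4)/(x + (n:ℝ) + 1 + 3/4) := by positivity
    calc x^2*(x+3/4)/(x+1/2)^2 / (x + (n:ℝ) + 1 + 3/4)
        = (x^2*(x+3/4)/(x+1/2)^2 / (x + n + 3/4)) * ((x + (n:ℝ) + 3/4)/(x + (n:ℝ) + 1 + 3/4)) := by
          have h1 : x + (n:ℝ) + 3/4 ≠ 0 := by linarith
          have h2 : x + (n:ℝ) + 1 + 3/4 ≠ 0 := by linarith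
          have h3 : (x+1/2)^2 ≠ 0 := by positivity
          field_simp
      _ ≤ (∏ i ∈ Finset.range (n+1), ((x+i)/(x+i+1/2))^2) * ((x+(n:ℝ)+1)/(x+(n:ℝ)+1+1/2))^2 := by
          apply mul_le_mul ih ht hstep
          positivity

lemma ratio_sq_eq (x : ℝ) (hx : 0 < x) (n : ℕ) (hn : n ≠ 0) :
    (Real.GammaSeq (x+1/2) n / Real.GammaSeq x n)^2
      = n * ∏ i ∈ Finset.range (n+1), ((x+i)/(x+i+1/2))^2 := by
  have hn0 : (0:ℝ) < n := by positivity
  have hP1 : (0:ℝ) < ∏ i ∈ Finset.range (n+1), (x + i) := by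
    apply Finset.prod_pos; intro i _; positivity
  have hP2 : (0:ℝ) < ∏ i ∈ Finset.range (n+1), (x + 1/2 + i) := by
    apply Finset.prod_pos; intro i _; positivity
  have hfac : (0:ℝ) < (Nat.factorial n : ℝ) := by positivity
  have hpow : (0:ℝ) < (n:ℝ) ^ (x:ℝ) := Real.rpow_pos_of_pos hn0 _
  have hr : Real.GammaSeq (x+1/2) n / Real.GammaSeq x n
      = (n:ℝ) ^ ((1:ℝ)/2) * ((∏ i ∈ Finset.range (n+1), (x + i)) / ∏ i ∈ Finset.range (n+1), (x + 1/2 + i)) := by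
    unfold Real.GammaSeq
    rw [show x + 1/2 = x + (1:ℝ)/2 by norm_num, Real.rpow_add hn0]
    field_simp
  rw [hr, mul_pow, ← Real.rpow_natCast ((n:ℝ) ^ ((1:ℝ)/2)) 2, ← Real.rpow_mul hn0.le]
  norm_num
  left
  simp only [div_pow, Finset.prod_div_distrib, ← Finset.prod_pow]
  congr 1
  exact Finset.prod_congr rfl (fun i _ => by ring)

lemma sq_ratio_ge (x : ℝ) (hx : 1/2 ≤ x) :
    x^2*(x+3/4)/(x+1/2)^2 ≤ (Real.Gamma (x+1/2) / Real.Gamma x)^2 := by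
  have hx0 : 0 < x := by linarith
  have hGne : Real.Gamma x ≠ 0 := (Real.Gamma_pos_of_pos hx0).ne'
  have hG : Tendsto (fun n => (Real.GammaSeq (x+1/2) n / Real.GammaSeq x n)^2) atTop
      (𝓝 ((Real.Gamma (x+1/2) / Real.Gamma x)^2)) :=
    (((Real.GammaSeq_tendsto_Gamma (x+1/2)).div (Real.GammaSeq_tendsto_Gamma x) hGne).pow 2)
  have hLow : Tendsto (fun n : ℕ => x^2*(x+3/4)/(x+1/2)^2 * ((n:ℝ)/((n:ℝ) + (x + 3/4)))) atTop
      (𝓝 (x^2*(x+3/4)/(x+1/2)^2)) := by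
    have h1 := tendsto_natCast_div_add_atTop (𝕜 := ℝ) (x + 3/4)
    have := Tendsto.const_mul (x^2*(x+3/4)/(x+1/2)^2) h1
    simpa using this
  refine le_of_tendsto_of_tendsto hLow hG ?_
  filter_upwards [eventually_ne_atTop 0] with n hn
  rw [ratio_sq_eq x hx0 n hn]
  have hn0 : (0:ℝ) ≤ n := Nat.cast_nonneg n
  have heq : x^2*(x+3/4)/(x+1/2)^2 * ((n:ℝ)/((n:ℝ) + (x + 3/4)))
      = (n:ℝ) * (x^2*(x+3/4)/(x+1/2)^2 / (x + n + 3/4)) := by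
    have h1 : (n:ℝ) + (x + 3/4) ≠ 0 := by linarith
    have h2 : x + (n:ℝ) + 3/4 ≠ 0 := by linarith
    have h3 : (x+1/2)^2 ≠ 0 := by positivity
    field_simp
    ring
  rw [heq]
  exact mul_le_mul_of_nonneg_left (prod_lower x hx n) hn0

theorem gamma_ratio_half_gt (d : ℕ) (hd : 1 ≤ d) :
    Real.sqrt (((d : ℝ) - 1/2) / 2) <
      Real.Gamma (((d : ℝ) + 1) / 2) / Real.Gamma ((d : ℝ) / 2) := by
  have hd1 : (1:ℝ) ≤ d := by exact_mod_cast hd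
  set x : ℝ := (d:ℝ)/2 with hxdef
  have hx : 1/2 ≤ x := by rw [hxdef]; linarith
  have hx0 : 0 < x := by linarith
  have hrpos : 0 < Real.Gamma (x + 1/2) / Real.Gamma x :=
    div_pos (Real.Gamma_pos_of_pos (by linarith)) (Real.Gamma_pos_of_pos hx0)
  have hL : x - 1/4 < x^2*(x+3/4)/(x+1/2)^2 := by
    rw [lt_div_iff₀ (by positivity)]
    nlinarith [sq_nonneg x]
  have h2 : x - 1/4 < (Real.Gamma (x+1/2) / Real.Gamma x)^2 :=
    lt_of_lt_of_le hL (sq_ratio_ge x hx)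
  have h3 : ((d:ℝ) - 1/2)/2 = x - 1/4 := by rw [hxdef]; ring
  have h4 : ((d:ℝ) + 1)/2 = x + 1/2 := by rw [hxdef]; ring
  rw [h3, h4]
  exact (Real.sqrt_lt' hrpos).mpr h2
end

section
/- Let d ≥ 1 be an integer, m > 0 a real number, and V : ℝ≥0 → ℝ a differentiable function such that x ↦ V(x) − m x²/2 is convex and V'(0) = 0. Set A = ∫₀^∞ x^{d−1} e^{−V(x)} dx and B = ∫₀^∞ V'(x) x^{d−1} e^{−V(x)} dx. Then B ≥ √(2m) · (Γ((d+1)/2)/Γ(d/2)) · A. -/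
open MeasureTheory Set Real Filter Topology

theorem bounce_rate_lower_bound_1d
    (d : ℕ) (hd : 1 ≤ d) (m : ℝ) (hm : 0 < m) (V : ℝ → ℝ)
    (hV : Differentiable ℝ V)
    (hconv : ConvexOn ℝ (Set.Ici 0) (fun x => V x - m * x ^ 2 / 2))
    (hV0 : deriv V 0 = 0)
    (hA : IntegrableOn (fun x => x ^ (d - 1) * Real.exp (-V x)) (Set.Ioi 0))
    (hB : IntegrableOn (fun x => deriv V x * x ^ (d - 1) * Real.exp (-V x)) (Set.Ioi 0)) :
    Real.sqrt (2 * m) * (Real.Gamma (((d : ℝ) + 1) / 2) / Real.Gamma ((d : ℝ) / 2)) *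
        (∫ x in Set.Ioi (0 : ℝ), x ^ (d - 1) * Real.exp (-V x)) ≤
      ∫ x in Set.Ioi (0 : ℝ), deriv V x * x ^ (d - 1) * Real.exp (-V x) := by
  obtain ⟨k, rfl⟩ : ∃ k, d = k + 1 := ⟨d - 1, (Nat.succ_pred_eq_of_pos hd).symm⟩
  simp only [Nat.add_sub_cancel] at hA hB ⊢
  -- derivative of the quadratic part
  have hq : ∀ x : ℝ, HasDerivAt (fun x : ℝ => m * x ^ 2 / 2) (m * x) x := by
    intro x
    have h := ((hasDerivAt_pow 2 x).const_mul m).div_const 2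
    refine h.congr_deriv ?_
    simp; ring
  have hg : ∀ x : ℝ, HasDerivAt (fun x => V x - m * x ^ 2 / 2) (deriv V x - m * x) x :=
    fun x => ((hV x).hasDerivAt).sub (hq x)
  have hgd : ∀ x : ℝ, deriv (fun x => V x - m * x ^ 2 / 2) x = deriv V x - m * x :=
    fun x => (hg x).deriv
  -- V' x ≥ m x on [0, ∞)
  have hL1 : ∀ x : ℝ, 0 ≤ x → m * x ≤ deriv V x := by
    intro x hx
    have h := hconv.monotoneOn_deriv (fun y _ => (hg y).differentiableAt)
      self_mem_Ici (mem_Ici.mpr hx) hx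
    rw [hgd, hgd, hV0] at h
    simp only [mul_zero, sub_zero] at h
    linarith
  -- W := V - m x²/2 is monotone on [0, ∞)
  have hWmono : MonotoneOn (fun x => V x - m * x ^ 2 / 2) (Set.Ici 0) := by
    apply monotoneOn_of_deriv_nonneg (convex_Ici 0)
    · exact (hV.continuous.sub (by continuity)).continuousOn
    · intro x _; exact (hg x).differentiableAt.differentiableWithinAt
    · intro x hx
      rw [hgd]
      rw [interior_Ici] at hx
      linarith [hL1 x (le_of_lt hx)]
  have hVlb : ∀ x : ℝ, 0 ≤ x → V 0 + m * x ^ 2 / 2 ≤ V x := by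
    intro x hx
    have h := hWmono self_mem_Ici (mem_Ici.mpr hx) hx
    simp only at h
    nlinarith
  have hexp : ∀ x : ℝ, 0 ≤ x →
      Real.exp (-V x) ≤ Real.exp (-V 0) * Real.exp (-(m/2) * x ^ 2) := by
    intro x hx
    rw [← Real.exp_add]
    apply Real.exp_le_exp.mpr
    have := hVlb x hx; linarith
  -- Gaussian moments integrability
  have hGint : ∀ j : ℕ,
      IntegrableOn (fun x : ℝ => x ^ j * Real.exp (-(m/2) * x ^ 2)) (Set.Ioi 0) := by
    intro j
    have h := integrableOn_rpow_mul_exp_neg_mul_sq (b := m/2) (by linarith)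
      (s := (j : ℝ)) (lt_of_lt_of_le (by norm_num) (Nat.cast_nonneg j))
    exact h.congr_fun (fun x _ => by simp only [Real.rpow_natCast]) measurableSet_Ioi
  -- integrability of x^j e^{-V}
  have hcontV : Continuous fun x : ℝ => Real.exp (-V x) :=
    Real.continuous_exp.comp hV.continuous.neg
  have hVint : ∀ j : ℕ,
      IntegrableOn (fun x : ℝ => x ^ j * Real.exp (-V x)) (Set.Ioi 0) := by
    intro j
    refine Integrable.mono' ((hGint j).const_mul (Real.exp (-V 0)))
      (((continuous_pow j).mul hcontV).aestronglyMeasurable.restrict) ?_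
    filter_upwards [ae_restrict_mem measurableSet_Ioi] with x hx
    have hx0 : (0:ℝ) ≤ x := le_of_lt hx
    rw [Real.norm_eq_abs, abs_of_nonneg (by positivity)]
    calc x ^ j * Real.exp (-V x)
        ≤ x ^ j * (Real.exp (-V 0) * Real.exp (-(m/2) * x ^ 2)) :=
          mul_le_mul_of_nonneg_left (hexp x hx0) (by positivity)
      _ = Real.exp (-V 0) * (x ^ j * Real.exp (-(m/2) * x ^ 2)) := by ring
  -- integration by parts
  have hFderiv : ∀ x : ℝ, HasDerivAt (fun x => x ^ k * Real.exp (-V x))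
      ((k:ℝ) * (x ^ (k-1) * Real.exp (-V x)) - deriv V x * x ^ k * Real.exp (-V x)) x := by
    intro x
    have h1 : HasDerivAt (fun x : ℝ => x ^ k) ((k:ℝ) * x ^ (k-1)) x := hasDerivAt_pow k x
    have h2 : HasDerivAt (fun x => Real.exp (-V x)) (Real.exp (-V x) * (-deriv V x)) x :=
      (((hV x).hasDerivAt).neg).exp
    refine (h1.mul h2).congr_deriv ?_
    ring
  have hF'int : IntegrableOn (fun x : ℝ =>
      (k:ℝ) * (x ^ (k-1) * Real.exp (-V x)) - deriv V x * x ^ k * Real.exp (-V x))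
      (Set.Ioi 0) := ((hVint (k-1)).const_mul _).sub hB
  have htend : Tendsto (fun x : ℝ => x ^ k * Real.exp (-V x)) atTop (𝓝 0) := by
    have hbound : Tendsto
        (fun x : ℝ => Real.exp (-V 0) * (x ^ ((k:ℕ):ℝ) * Real.exp (-(m/2) * x ^ 2)))
        atTop (𝓝 0) := by
      have hlo := rpow_mul_exp_neg_mul_sq_isLittleO_exp_neg (b := m/2) (by linarith) ((k:ℕ):ℝ)
      have hhalf : Tendsto (fun x : ℝ => Real.exp (-(1/2) * x)) atTop (𝓝 0) := by
        have h1 : Tendsto (fun x : ℝ => x * (1/2)) atTop atTop :=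
          tendsto_id.atTop_mul_const (by norm_num)
        have h2 : Tendsto (fun x : ℝ => -(x * (1/2))) atTop atBot :=
          tendsto_neg_atBot_iff.mpr h1
        have h3 := Real.tendsto_exp_atBot.comp h2
        refine h3.congr fun x => ?_
        simp only [Function.comp]
        ring_nf
      have hin := hlo.tendsto_zero_of_tendsto hhalf
      simpa using hin.const_mul (Real.exp (-V 0))
    apply squeeze_zero' (Filter.Eventually.mono (eventually_ge_atTop (0:ℝ))
      (fun x hx => by positivity)) _ hbound
    filter_upwards [eventually_ge_atTop (0:ℝ)] with x hx
    calc x ^ k * Real.exp (-V x)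
        ≤ x ^ k * (Real.exp (-V 0) * Real.exp (-(m/2) * x ^ 2)) :=
          mul_le_mul_of_nonneg_left (hexp x hx) (by positivity)
      _ = Real.exp (-V 0) * (x ^ ((k:ℕ):ℝ) * Real.exp (-(m/2) * x ^ 2)) := by
          rw [Real.rpow_natCast]; ring
  have hIBP : ∫ x in Set.Ioi (0:ℝ),
      ((k:ℝ) * (x ^ (k-1) * Real.exp (-V x)) - deriv V x * x ^ k * Real.exp (-V x))
      = 0 - (0:ℝ) ^ k * Real.exp (-V 0) := by
    have h := integral_Ioi_of_hasDerivAt_of_tendsto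
      (f := fun x => x ^ k * Real.exp (-V x)) (a := 0) (m := 0)
      (((continuous_pow k).mul hcontV).continuousWithinAt)
      (fun x _ => hFderiv x) hF'int htend
    simpa using h
  have hsplit : (∫ x in Set.Ioi (0:ℝ), deriv V x * x ^ k * Real.exp (-V x))
      = (k:ℝ) * (∫ x in Set.Ioi (0:ℝ), x ^ (k-1) * Real.exp (-V x))
        + (0:ℝ) ^ k * Real.exp (-V 0) := by
    rw [integral_sub ((hVint (k-1)).const_mul _) hB, integral_const_mul] at hIBP
    linarith
  -- Gaussian moment values
  have hGval : ∀ j : ℕ, (∫ x in Set.Ioi (0:ℝ), x ^ j * Real.exp (-(m/2) * x ^ 2))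
      = (m/2) ^ (-((j:ℝ)+1)/2) * (1/2) * Real.Gamma (((j:ℝ)+1)/2) := by
    intro j
    rw [← integral_rpow_mul_exp_neg_mul_rpow (p := 2) (q := (j:ℝ)) two_pos
      (lt_of_lt_of_le (by norm_num) (Nat.cast_nonneg j)) (b := m/2) (by linarith)]
    refine setIntegral_congr_fun measurableSet_Ioi fun x hx => ?_
    rw [Real.rpow_natCast, show (2:ℝ) = ((2:ℕ):ℝ) by norm_num, Real.rpow_natCast]
  have hGammapos : ∀ t : ℝ, 0 < t → 0 < Real.Gamma t := fun t ht => Real.Gamma_pos_of_pos ht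
  have hGpos : ∀ j : ℕ, 0 < ∫ x in Set.Ioi (0:ℝ), x ^ j * Real.exp (-(m/2) * x ^ 2) := by
    intro j
    rw [hGval]
    have h1 : (0:ℝ) < (m/2) ^ (-((j:ℝ)+1)/2) := Real.rpow_pos_of_pos (by linarith) _
    have h2 := hGammapos (((j:ℝ)+1)/2) (by positivity)
    positivity
  -- sqrt(2m) = 2 * sqrt(m/2)
  have hs : Real.sqrt (2*m) = 2 * Real.sqrt (m/2) := by
    rw [show (2*m : ℝ) = 2^2 * (m/2) by ring, Real.sqrt_mul (by positivity),
      Real.sqrt_sq (by norm_num)]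
  have hspos : 0 < Real.sqrt (m/2) := Real.sqrt_pos.mpr (by linarith)
  have hsval : Real.sqrt (m/2) = (m/2) ^ ((1:ℝ)/2) := Real.sqrt_eq_rpow _
  -- case split on k
  rcases Nat.eq_zero_or_pos k with hk0 | hkpos
  · -- d = 1
    subst hk0
    simp only [pow_zero, Nat.cast_zero, zero_mul, one_mul, zero_add, Nat.zero_sub,
      Nat.cast_one] at hsplit ⊢
    rw [hsplit]
    set G0 : ℝ := ∫ x in Set.Ioi (0:ℝ), Real.exp (-(m/2) * x ^ 2) with hG0
    have hG0int : IntegrableOn (fun x : ℝ => Real.exp (-(m/2) * x ^ 2)) (Set.Ioi 0) :=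
      (hGint 0).congr_fun (fun x _ => by simp) measurableSet_Ioi
    have hAle : (∫ x in Set.Ioi (0:ℝ), Real.exp (-V x)) ≤ Real.exp (-V 0) * G0 := by
      rw [hG0, ← integral_const_mul]
      refine setIntegral_mono_on ?_ ?_ measurableSet_Ioi ?_
      · simpa using hVint 0
      · exact hG0int.const_mul _
      · intro x hx
        exact hexp x (le_of_lt hx)
    have hG0val : G0 = (m/2) ^ (-(1:ℝ)/2) * (1/2) * Real.Gamma (1/2) := by
      have h0 := hGval 0
      simp only [Nat.cast_zero, zero_add, pow_zero, one_mul] at h0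
      rw [hG0, ← h0]
    have hrpow : (m/2 : ℝ) ^ (-(1:ℝ)/2) = (Real.sqrt (m/2))⁻¹ := by
      rw [show (-(1:ℝ)/2) = -((1:ℝ)/2) by norm_num, Real.rpow_neg (by linarith), ← hsval]
    have hΓ : Real.Gamma (1/2 : ℝ) ≠ 0 := ne_of_gt (hGammapos _ (by norm_num))
    have hsne : Real.sqrt (m/2) ≠ 0 := ne_of_gt hspos
    have hc : Real.sqrt (2*m) * (Real.Gamma (((1:ℝ)+1)/2) / Real.Gamma ((1:ℝ)/2)) * G0 = 1 := by
      rw [show (((1:ℝ)+1)/2) = 1 by norm_num, Real.Gamma_one, hG0val, hrpow, hs]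
      field_simp
    have hcpos : 0 ≤ Real.sqrt (2*m) * (Real.Gamma (((1:ℝ)+1)/2) / Real.Gamma ((1:ℝ)/2)) := by
      have h1 := hGammapos (((1:ℝ)+1)/2) (by norm_num)
      have h2 := hGammapos ((1:ℝ)/2) (by norm_num)
      positivity
    calc Real.sqrt (2*m) * (Real.Gamma (((1:ℝ)+1)/2) / Real.Gamma ((1:ℝ)/2)) *
          (∫ x in Set.Ioi (0:ℝ), Real.exp (-V x))
        ≤ Real.sqrt (2*m) * (Real.Gamma (((1:ℝ)+1)/2) / Real.Gamma ((1:ℝ)/2)) *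
          (Real.exp (-V 0) * G0) := mul_le_mul_of_nonneg_left hAle hcpos
      _ = (Real.sqrt (2*m) * (Real.Gamma (((1:ℝ)+1)/2) / Real.Gamma ((1:ℝ)/2)) * G0) *
          Real.exp (-V 0) := by ring
      _ = Real.exp (-V 0) := by rw [hc, one_mul]
  · -- d ≥ 2
    obtain ⟨j, rfl⟩ : ∃ j, k = j + 1 := ⟨k - 1, (Nat.succ_pred_eq_of_pos hkpos).symm⟩
    simp only [Nat.add_sub_cancel] at hsplit ⊢
    rw [zero_pow (Nat.succ_ne_zero j), zero_mul, add_zero] at hsplit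
    set Gk : ℝ := ∫ x in Set.Ioi (0:ℝ), x ^ (j+1) * Real.exp (-(m/2) * x ^ 2) with hGk
    set Gj : ℝ := ∫ x in Set.Ioi (0:ℝ), x ^ j * Real.exp (-(m/2) * x ^ 2) with hGj
    have hGkpos : 0 < Gk := hGpos (j+1)
    have hGjpos : 0 < Gj := hGpos j
    -- the key Chebyshev-type inequality
    have hkey : Gj * (∫ x in Set.Ioi (0:ℝ), x ^ (j+1) * Real.exp (-V x))
        ≤ Gk * (∫ x in Set.Ioi (0:ℝ), x ^ j * Real.exp (-V x)) := by
      set r : ℝ := Gk / Gj with hr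
      have hrpos : 0 < r := div_pos hGkpos hGjpos
      set t : ℝ := Real.exp (-(V r - m * r ^ 2 / 2)) with ht
      have hφint : IntegrableOn (fun x : ℝ =>
          t * (Gk * (x ^ j * Real.exp (-(m/2) * x ^ 2))
            - Gj * (x ^ (j+1) * Real.exp (-(m/2) * x ^ 2)))) (Set.Ioi 0) :=
        (((hGint j).const_mul Gk).sub ((hGint (j+1)).const_mul Gj)).const_mul t
      have hψint : IntegrableOn (fun x : ℝ =>
          Gk * (x ^ j * Real.exp (-V x)) - Gj * (x ^ (j+1) * Real.exp (-V x))) (Set.Ioi 0) :=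
        ((hVint j).const_mul Gk).sub ((hVint (j+1)).const_mul Gj)
      have hptwise : ∀ x ∈ Set.Ioi (0:ℝ),
          t * (Gk * (x ^ j * Real.exp (-(m/2) * x ^ 2))
            - Gj * (x ^ (j+1) * Real.exp (-(m/2) * x ^ 2)))
          ≤ Gk * (x ^ j * Real.exp (-V x)) - Gj * (x ^ (j+1) * Real.exp (-V x)) := by
        intro x hx
        have hx0 : (0:ℝ) < x := hx
        have hWx : Real.exp (-V x)
            = Real.exp (-(V x - m * x ^ 2 / 2)) * Real.exp (-(m/2) * x ^ 2) := by
          rw [← Real.exp_add]; congr 1; ring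
        set ex : ℝ := Real.exp (-(V x - m * x ^ 2 / 2)) with hex
        have hstep : t * ((Gk - Gj * x) * (x ^ j * Real.exp (-(m/2) * x ^ 2)))
            ≤ ex * ((Gk - Gj * x) * (x ^ j * Real.exp (-(m/2) * x ^ 2))) := by
          have hnn : (0:ℝ) ≤ x ^ j * Real.exp (-(m/2) * x ^ 2) := by positivity
          rcases le_total x r with hxr | hxr
          · have hsign : 0 ≤ Gk - Gj * x := by
              have h := mul_le_mul_of_nonneg_left hxr hGjpos.le
              rw [hr, mul_div_cancel₀ _ (ne_of_gt hGjpos)] at h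
              linarith
            have hW : V x - m * x ^ 2 / 2 ≤ V r - m * r ^ 2 / 2 :=
              hWmono (mem_Ici.mpr hx0.le) (mem_Ici.mpr hrpos.le) hxr
            have hte : t ≤ ex := by
              rw [ht, hex]; exact Real.exp_le_exp.mpr (by linarith)
            exact mul_le_mul_of_nonneg_right hte (mul_nonneg hsign hnn)
          · have hsign : Gk - Gj * x ≤ 0 := by
              have h := mul_le_mul_of_nonneg_left hxr hGjpos.le
              rw [hr, mul_div_cancel₀ _ (ne_of_gt hGjpos)] at h
              linarith
            have hW : V r - m * r ^ 2 / 2 ≤ V x - m * x ^ 2 / 2 :=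
              hWmono (mem_Ici.mpr hrpos.le) (mem_Ici.mpr hx0.le) hxr
            have het : ex ≤ t := by
              rw [ht, hex]; exact Real.exp_le_exp.mpr (by linarith)
            have hnp : (Gk - Gj * x) * (x ^ j * Real.exp (-(m/2) * x ^ 2)) ≤ 0 :=
              mul_nonpos_of_nonpos_of_nonneg hsign hnn
            exact mul_le_mul_of_nonpos_right het hnp
        calc t * (Gk * (x ^ j * Real.exp (-(m/2) * x ^ 2))
              - Gj * (x ^ (j+1) * Real.exp (-(m/2) * x ^ 2)))
            = t * ((Gk - Gj * x) * (x ^ j * Real.exp (-(m/2) * x ^ 2))) := by ring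
          _ ≤ ex * ((Gk - Gj * x) * (x ^ j * Real.exp (-(m/2) * x ^ 2))) := hstep
          _ = Gk * (x ^ j * Real.exp (-V x)) - Gj * (x ^ (j+1) * Real.exp (-V x)) := by
              rw [hWx]; ring
      have hmono := setIntegral_mono_on hφint hψint measurableSet_Ioi hptwise
      rw [integral_const_mul,
        integral_sub ((hGint j).const_mul Gk) ((hGint (j+1)).const_mul Gj),
        integral_const_mul, integral_const_mul,
        integral_sub ((hVint j).const_mul Gk) ((hVint (j+1)).const_mul Gj),
        integral_const_mul, integral_const_mul, ← hGj, ← hGk] at hmono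
      have hz : Gk * Gj - Gj * Gk = 0 := by ring
      rw [hz, mul_zero] at hmono
      linarith
    -- the constant identity
    have hGkval : Gk = (m/2) ^ (-((j:ℝ)+2)/2) * (1/2) * Real.Gamma (((j:ℝ)+2)/2) := by
      rw [hGk, hGval]
      have hcast : ((j+1:ℕ):ℝ) + 1 = (j:ℝ) + 2 := by push_cast; ring
      rw [hcast]
    have hGjval : Gj = (m/2) ^ (-((j:ℝ)+1)/2) * (1/2) * Real.Gamma (((j:ℝ)+1)/2) := by
      rw [hGj, hGval]
    have hrpowsplit : (m/2 : ℝ) ^ (-((j:ℝ)+2)/2)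
        = (m/2) ^ (-((j:ℝ)+1)/2) * ((m/2) ^ ((1:ℝ)/2))⁻¹ := by
      rw [← Real.rpow_neg (by linarith : (0:ℝ) ≤ m/2) ((1:ℝ)/2),
        ← Real.rpow_add (by linarith : (0:ℝ) < m/2)]
      congr 1
      ring
    have hΓrec : Real.Gamma (((j:ℝ)+3)/2) = (((j:ℝ)+1)/2) * Real.Gamma (((j:ℝ)+1)/2) := by
      have h := Real.Gamma_add_one (s := ((j:ℝ)+1)/2) (by positivity)
      rw [show ((j:ℝ)+3)/2 = ((j:ℝ)+1)/2 + 1 by ring, h]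
    have hc : Gk * (Real.sqrt (2*m) *
        (Real.Gamma (((j:ℝ)+1+1+1)/2) / Real.Gamma (((j:ℝ)+1+1)/2)))
        = ((j:ℝ)+1) * Gj := by
      have hΓ2pos := hGammapos (((j:ℝ)+2)/2) (by positivity)
      have hΓ2ne : Real.Gamma (((j:ℝ)+2)/2) ≠ 0 := ne_of_gt hΓ2pos
      have hrne : ((m/2:ℝ) ^ ((1:ℝ)/2)) ≠ 0 :=
        ne_of_gt (Real.rpow_pos_of_pos (by linarith) _)
      rw [show ((j:ℝ)+1+1+1)/2 = ((j:ℝ)+3)/2 by ring,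
        show ((j:ℝ)+1+1)/2 = ((j:ℝ)+2)/2 by ring,
        hGkval, hGjval, hrpowsplit, hΓrec, hs, hsval]
      field_simp
    -- conclude
    rw [hsplit]
    push_cast
    rw [← mul_le_mul_iff_right₀ hGkpos]
    calc Gk * (Real.sqrt (2*m) * (Real.Gamma (((j:ℝ)+1+1+1)/2) / Real.Gamma (((j:ℝ)+1+1)/2)) *
          (∫ x in Set.Ioi (0:ℝ), x ^ (j+1) * Real.exp (-V x)))
        = (Gk * (Real.sqrt (2*m) * (Real.Gamma (((j:ℝ)+1+1+1)/2) / Real.Gamma (((j:ℝ)+1+1)/2)))) *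
          (∫ x in Set.Ioi (0:ℝ), x ^ (j+1) * Real.exp (-V x)) := by ring
      _ = ((j:ℝ)+1) * (Gj * (∫ x in Set.Ioi (0:ℝ), x ^ (j+1) * Real.exp (-V x))) := by
          rw [hc]; ring
      _ ≤ ((j:ℝ)+1) * (Gk * (∫ x in Set.Ioi (0:ℝ), x ^ j * Real.exp (-V x))) :=
          mul_le_mul_of_nonneg_left hkey (by positivity)
      _ = Gk * (((j:ℝ)+1) * (∫ x in Set.Ioi (0:ℝ), x ^ j * Real.exp (-V x))) := by ring
end

section
/- Let V, W, Z, A be symmetric 2×2 real matrices with 0 ⪯ A, −Z ⪯ A, A ⪯ V + mW and A ⪯ V + MW, where 0 < m ≤ M. Then for all symmetric 2×2 matrices X, P, Q satisfying 0 ⪯ Q ⪯ X and mX ⪯ P ⪯ MX, one has Tr(VX + WP + ZQ) ≥ 0. -/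
open Matrix
open scoped MatrixOrder

private lemma trace_nonneg_of_psd {n : Type*} [Fintype n] [DecidableEq n]
    {A : Matrix n n ℝ} (hA : A.PosSemidef) : 0 ≤ A.trace := by
  rw [Matrix.trace]
  refine Finset.sum_nonneg fun i _ => ?_
  have := hA.dotProduct_mulVec_nonneg (Pi.single i 1)
  simpa [Matrix.mulVec, dotProduct, Pi.single_apply] using this

private lemma trace_mul_nonneg_of_psd {n : Type*} [Fintype n] [DecidableEq n]
    {A B : Matrix n n ℝ} (hA : A.PosSemidef) (hB : B.PosSemidef) :
    0 ≤ (A * B).trace := by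
  have hS : (CFC.sqrt A) * (CFC.sqrt A) = A := CFC.sqrt_mul_sqrt_self A hA.nonneg
  have hHerm : (CFC.sqrt A).conjTranspose = (CFC.sqrt A) := (CFC.sqrt_nonneg A).posSemidef.1
  have h1 : (((CFC.sqrt A) * (CFC.sqrt A)) * B).trace = ((CFC.sqrt A) * B * (CFC.sqrt A)).trace := by
    rw [Matrix.mul_assoc, Matrix.trace_mul_comm, Matrix.mul_assoc]
  have h2 : ((CFC.sqrt A) * B * (CFC.sqrt A)).PosSemidef := by
    have := hB.conjTranspose_mul_mul_same (CFC.sqrt A)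
    rwa [hHerm] at this
  calc (0:ℝ) ≤ ((CFC.sqrt A) * B * (CFC.sqrt A)).trace := trace_nonneg_of_psd h2
    _ = (A * B).trace := by rw [← h1, hS]

private lemma eq_zero_of_psd_neg_psd {A : Matrix (Fin 2) (Fin 2) ℝ}
    (hA : A.PosSemidef) (hA' : (-A).PosSemidef) : A = 0 := by
  have hq : ∀ x : Fin 2 → ℝ, star x ⬝ᵥ A.mulVec x = 0 := fun x => by
    have h' := hA'.dotProduct_mulVec_nonneg x
    rw [Matrix.neg_mulVec, dotProduct_neg] at h'
    have h := hA.dotProduct_mulVec_nonneg x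
    linarith
  have hsym : A 1 0 = A 0 1 := by
    have := hA.1
    rw [Matrix.IsHermitian, ← Matrix.ext_iff] at this
    simpa using this 0 1
  have h0 := hq ![1, 0]
  have h1 := hq ![0, 1]
  have h2 := hq ![1, 1]
  simp [Matrix.mulVec, dotProduct, Fin.sum_univ_two] at h0 h1 h2
  ext i j
  fin_cases i <;> fin_cases j <;> simp <;> linarith

theorem trace_VX_WP_ZQ_nonneg
    (m M : ℝ) (hm : 0 < m) (hmM : m ≤ M)
    (V W Z A : Matrix (Fin 2) (Fin 2) ℝ)
    (hV : V.IsSymm) (hW : W.IsSymm) (hZ : Z.IsSymm) (hA : A.IsSymm)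
    (hA0 : A.PosSemidef) (hZA : (A + Z).PosSemidef)
    (hAVm : (V + m • W - A).PosSemidef) (hAVM : (V + M • W - A).PosSemidef)
    (X P Q : Matrix (Fin 2) (Fin 2) ℝ)
    (hX : X.IsSymm) (hP : P.IsSymm) (hQ : Q.IsSymm)
    (hQ0 : Q.PosSemidef) (hQX : (X - Q).PosSemidef)
    (hPm : (P - m • X).PosSemidef) (hPM : (M • X - P).PosSemidef) :
    0 ≤ (V * X + W * P + Z * Q).trace := by
  have hXpsd : X.PosSemidef := by
    have := hQ0.add hQX
    simpa using this
  -- Tr(ZQ) + Tr(AX) ≥ 0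
  have h1 : 0 ≤ ((A + Z) * Q).trace := trace_mul_nonneg_of_psd hZA hQ0
  have h2 : 0 ≤ (A * (X - Q)).trace := trace_mul_nonneg_of_psd hA0 hQX
  have hZAX : 0 ≤ (Z * Q).trace + (A * X).trace := by
    have e1 : ((A + Z) * Q).trace + (A * (X - Q)).trace
        = (Z * Q).trace + (A * X).trace := by
      simp only [Matrix.add_mul, Matrix.mul_sub, Matrix.trace_add, Matrix.trace_sub]
      ring
    linarith
  -- suffices Tr(VX) + Tr(WP) ≥ Tr(AX)
  suffices hkey : (A * X).trace ≤ (V * X).trace + (W * P).trace by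
    simp only [Matrix.trace_add]
    linarith
  rcases lt_or_eq_of_le hmM with hlt | heq
  · have h3 : 0 ≤ ((V + m • W - A) * (M • X - P)).trace :=
      trace_mul_nonneg_of_psd hAVm hPM
    have h4 : 0 ≤ ((V + M • W - A) * (P - m • X)).trace :=
      trace_mul_nonneg_of_psd hAVM hPm
    have e2 : ((V + m • W - A) * (M • X - P)).trace
        + ((V + M • W - A) * (P - m • X)).trace
        = (M - m) * ((V * X).trace + (W * P).trace - (A * X).trace) := by
      simp only [Matrix.add_mul, Matrix.sub_mul, Matrix.mul_sub, Matrix.mul_add,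
        Matrix.smul_mul, Matrix.mul_smul, Matrix.trace_add, Matrix.trace_sub,
        Matrix.trace_smul, smul_eq_mul, smul_smul]
      ring
    have hMm : 0 < M - m := by linarith
    nlinarith [h3, h4, e2]
  · -- m = M, so P = m • X
    have hPX : P - m • X = 0 := by
      apply eq_zero_of_psd_neg_psd hPm
      rw [heq, neg_sub]
      exact hPM
    have hPeq : P = m • X := by
      have := hPX
      rwa [sub_eq_zero] at this
    have h5 : 0 ≤ ((V + m • W - A) * X).trace :=
      trace_mul_nonneg_of_psd hAVm hXpsd
    have e3 : ((V + m • W - A) * X).trace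
        = (V * X).trace + (W * P).trace - (A * X).trace := by
      rw [hPeq]
      simp only [Matrix.add_mul, Matrix.sub_mul, Matrix.smul_mul, Matrix.mul_smul,
        Matrix.trace_add, Matrix.trace_sub, Matrix.trace_smul, smul_eq_mul]
    linarith
end

section
/- Let A be the 2×2 symmetric matrix with entries A₁₁ = a, A₁₂ = A₂₁ = b, A₂₂ = c, where a, c > 0 and b² < ac, and let A' be the matrix with b replaced by −b. Set C = (ac + b² + 2√(ac·b²))/(ac − b²). Then A' ⪯ C·A and A ⪯ C·A'. -/
open Matrix

lemma psd2 (p q r : ℝ) (hp : 0 ≤ p) (hr : 0 ≤ r) (hd : q ^ 2 ≤ p * r) :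
    (!![p, q; q, r] : Matrix (Fin 2) (Fin 2) ℝ).PosSemidef := by
  rw [Matrix.posSemidef_iff_dotProduct_mulVec]
  constructor
  · ext i j
    fin_cases i <;> fin_cases j <;>
      simp [Matrix.conjTranspose_apply]
  · intro x
    simp [Matrix.mulVec, dotProduct, Fin.sum_univ_two]
    rcases eq_or_lt_of_le hp with h0 | h0
    · have hq : q = 0 := by nlinarith [sq_nonneg q]
      subst hq
      subst h0
      nlinarith [mul_nonneg hr (sq_nonneg (x 1))]
    · nlinarith [sq_nonneg (p * x 0 + q * x 1),
        mul_nonneg (sub_nonneg.2 hd) (sq_nonneg (x 1))]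

theorem weighted_metric_equivalence
    (a b c : ℝ) (ha : 0 < a) (hc : 0 < c) (hb : b ^ 2 < a * c) :
    (((a * c + b ^ 2 + 2 * Real.sqrt (a * c * b ^ 2)) / (a * c - b ^ 2)) •
        (!![a, b; b, c] : Matrix (Fin 2) (Fin 2) ℝ) - !![a, -b; -b, c]).PosSemidef ∧
      (((a * c + b ^ 2 + 2 * Real.sqrt (a * c * b ^ 2)) / (a * c - b ^ 2)) •
        (!![a, -b; -b, c] : Matrix (Fin 2) (Fin 2) ℝ) - !![a, b; b, c]).PosSemidef := by
  set s := Real.sqrt (a * c * b ^ 2) with hs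
  have hs0 : 0 ≤ s := Real.sqrt_nonneg _
  have hs2 : s ^ 2 = a * c * b ^ 2 := Real.sq_sqrt (by positivity)
  have hdpos : 0 < a * c - b ^ 2 := by linarith
  set C := (a * c + b ^ 2 + 2 * s) / (a * c - b ^ 2) with hC
  have hCd : C * (a * c - b ^ 2) = a * c + b ^ 2 + 2 * s :=
    div_mul_cancel₀ _ (ne_of_gt hdpos)
  have hC1 : 1 ≤ C := by
    rw [hC, le_div_iff₀ hdpos]
    nlinarith [sq_nonneg b]
  have hp : 0 ≤ C * a - a := by nlinarith
  have hr : 0 ≤ C * c - c := by nlinarith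
  have h2 : (C * (a * c - b ^ 2)) ^ 2 = (a * c + b ^ 2 + 2 * s) ^ 2 := by rw [hCd]
  have key : (C * b + b) ^ 2 ≤ (C * a - a) * (C * c - c) := by
    nlinarith [h2, hCd, hs2, hdpos]
  constructor
  · have hm : C • (!![a, b; b, c] : Matrix (Fin 2) (Fin 2) ℝ) - !![a, -b; -b, c] =
        !![C * a - a, C * b + b; C * b + b, C * c - c] := by
      ext i j
      fin_cases i <;> fin_cases j <;> simp <;> try ring
    rw [hm]
    exact psd2 _ _ _ hp hr key
  · have hm : C • (!![a, -b; -b, c] : Matrix (Fin 2) (Fin 2) ℝ) - !![a, b; b, c] =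
        !![C * a - a, -(C * b + b); -(C * b + b), C * c - c] := by
      ext i j
      fin_cases i <;> fin_cases j <;> simp <;> try ring
    rw [hm]
    exact psd2 _ _ _ hp hr (by rwa [neg_pow, neg_one_pow_eq_one_iff_even (by norm_num) |>.2 ⟨1, rfl⟩, one_mul] )
end
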